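/- Let n ≥ 2 and let t_1, ..., t_n be pairwise distinct reals. Let (E_0, E_1, ..., E_n) be a strictly admissible (n+1)-tuple of measurable subsets of ℝ relative to the maps L_0(x,y) = x and L_j(x,y) = y + t_j x for 1 ≤ j ≤ n. For 0 ≤ r ≤ min_{j≥1} |E_j|, set S_0^⋆(r) = {(x,y) : |x| ≤ |E_0|/2} and S_j^⋆(r) = {(x,y) : |y + t_j x| ≤ (|E_j| − r)/2} for j ≥ 1. Then there exists r̄ ∈ (0, min_{1≤j≤n} |E_j|) such that: (a) the (n+1)-tuple with measures (|E_0|, |E_1| − r̄, ..., |E_n| − r̄) is admissible, and (b) S_0^⋆ ⊇ ⋂_{j≥1} S_j^⋆(r̄). -/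

import Mathlib

/-!
Write `a_j = |E_j|`, `c = |E₀|/2` and `a_j - r` for the width of `S_j^⋆(r)`. On a vertical line
`x = const`, each `S_j^⋆(r)` cuts out an interval, and by one-dimensional Helly these intervals
meet iff they meet pairwise, i.e. iff `|t_j - t_k| |x| ≤ (a_j + a_k)/2 - r` for all `j ≠ k`.
Hence `⋂_j S_j^⋆(r) ⊆ S_0^⋆` exactly when `r` is at least
`r̄ = min_{j ≠ k} ((a_j + a_k)/2 - c |t_j - t_k|)`, and at `r = r̄` the intersection still reaches
the line `x = c`, so it touches the boundary of `S_0^⋆`. A point of `S_0^⋆ ∩ ⋂_{j ≠ i} S_j^⋆`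
outside `S_i^⋆` gives an abscissa `x_i` where strip `i` sticks out of every other strip; this
forces `r̄ < a_j`, and the point of the upper edge of `S_i^⋆(r̄)` above `x_i` still lies in
`S_0^⋆ ∩ ⋂_{j ≠ i} S_j^⋆(r̄)`. Touching a boundary rules out an open set squeezed in between.
-/

open MeasureTheory Set

/-- The strip `S_0^⋆ = {(x,y) : |x| ≤ |E₀|/2}`. -/
def strip0 (E0 : Set ℝ) : Set (ℝ × ℝ) :=
  {p | |p.1| ≤ (MeasureTheory.volume E0).toReal / 2}

/-- The strip `S_j^⋆(r) = {(x,y) : |y + t x| ≤ (|E| - r)/2}`. -/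
def stripT (t : ℝ) (E : Set ℝ) (r : ℝ) : Set (ℝ × ℝ) :=
  {p | |p.2 + t * p.1| ≤ ((MeasureTheory.volume E).toReal - r) / 2}

open Filter Topology

lemma notMem_interior_of_forall_pos_add_smul_notMem {V : Type*} [AddCommGroup V] [Module ℝ V]
    [TopologicalSpace V] [ContinuousAdd V] [ContinuousSMul ℝ V] {S : Set V} {p v : V}
    (h : ∀ s : ℝ, 0 < s → p + s • v ∉ S) : p ∉ interior S := by
  have hlim : Tendsto (fun s : ℝ => p + s • v) (𝓝[>] 0) (𝓝 p) := by
    have hcont : Continuous fun s : ℝ => p + s • v := by fun_prop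
    simpa using (hcont.tendsto 0).mono_left nhdsWithin_le_nhds
  have hp : p ∈ closure Sᶜ :=
    mem_closure_of_tendsto hlim (eventually_mem_nhdsWithin.mono fun s hs => h s hs)
  rwa [closure_compl] at hp

lemma mul_le_abs_mul_of_abs_le {b x c : ℝ} (hx : |x| ≤ c) : b * x ≤ |b| * c :=
  (le_abs_self _).trans (abs_mul b x ▸ mul_le_mul_of_nonneg_left hx (abs_nonneg b))

lemma notMem_interior_strip0 {E0 : Set ℝ} {p : ℝ × ℝ} (hp : p.1 = (volume E0).toReal / 2) :
    p ∉ interior (strip0 E0) := by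
  refine notMem_interior_of_forall_pos_add_smul_notMem (v := (1, 0)) fun s hs hmem => ?_
  have hle : |p.1 + s| ≤ (volume E0).toReal / 2 := by simpa [strip0] using hmem
  linarith [le_abs_self (p.1 + s)]

lemma notMem_interior_stripT {t r : ℝ} {E : Set ℝ} {p : ℝ × ℝ}
    (hp : p.2 + t * p.1 = ((volume E).toReal - r) / 2) : p ∉ interior (stripT t E r) := by
  refine notMem_interior_of_forall_pos_add_smul_notMem (v := (0, 1)) fun s hs hmem => ?_
  have hle : |p.2 + s + t * p.1| ≤ ((volume E).toReal - r) / 2 := by simpa [stripT] using hmem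
  linarith [le_abs_self (p.2 + s + t * p.1)]

lemma abs_sub_mul_abs_le_of_mem_stripT {s u r : ℝ} {E F : Set ℝ} {p : ℝ × ℝ}
    (hs : p ∈ stripT s E r) (hu : p ∈ stripT u F r) :
    |s - u| * |p.1| ≤ ((volume E).toReal + (volume F).toReal) / 2 - r := by
  rw [← abs_mul, show (s - u) * p.1 = (p.2 + s * p.1) - (p.2 + u * p.1) by ring]
  have hs : |p.2 + s * p.1| ≤ ((volume E).toReal - r) / 2 := hs
  have hu : |p.2 + u * p.1| ≤ ((volume F).toReal - r) / 2 := hu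
  linarith [abs_sub (p.2 + s * p.1) (p.2 + u * p.1)]

lemma exists_abs_le_forall_sub_lt {ι : Type*} {t : ι → ℝ} {E0 : Set ℝ} {E : ι → Set ℝ}
    {i : ι} {r : ℝ}
    (h : ¬ (strip0 E0 ∩ ⋂ j ∈ ({i}ᶜ : Set ι), stripT (t j) (E j) r) ⊆ stripT (t i) (E i) r) :
    ∃ x, |x| ≤ (volume E0).toReal / 2 ∧ ∀ j, j ≠ i →
      (volume (E i)).toReal - (volume (E j)).toReal < 2 * (t i - t j) * x := by
  obtain ⟨p, ⟨hp0, hpj⟩, hpi⟩ := not_subset.1 h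
  have hpj : ∀ j, j ≠ i → |p.2 + t j * p.1| ≤ ((volume (E j)).toReal - r) / 2 :=
    fun j hj => mem_iInter₂.1 hpj j hj
  have hpi : ((volume (E i)).toReal - r) / 2 < |p.2 + t i * p.1| := not_le.1 hpi
  -- after reflecting `p` through the origin if necessary, it leaves `S_i^⋆` through the upper edge
  rcases le_or_gt 0 (p.2 + t i * p.1) with hsgn | hsgn
  · rw [abs_of_nonneg hsgn] at hpi
    exact ⟨p.1, hp0, fun j hj => by linarith [(abs_le.1 (hpj j hj)).2]⟩
  · rw [abs_of_neg hsgn] at hpi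
    exact ⟨-p.1, (abs_neg p.1).trans_le hp0, fun j hj => by linarith [(abs_le.1 (hpj j hj)).1]⟩

section PairThreshold

variable {ι : Type*} (t : ι → ℝ) (E0 : Set ℝ) (E : ι → Set ℝ)

/-- The truncation `r` at which `S_j^⋆(r) ∩ S_k^⋆(r)` becomes exactly as wide in `x` as `S_0^⋆`. -/
noncomputable def pairThreshold (j k : ι) : ℝ :=
  ((volume (E j)).toReal + (volume (E k)).toReal) / 2 - (volume E0).toReal / 2 * |t j - t k|

lemma exists_pairThreshold_min [Finite ι] [Nontrivial ι] :
    ∃ j k, j ≠ k ∧ ∀ j' k', j' ≠ k' → pairThreshold t E0 E j k ≤ pairThreshold t E0 E j' k' := by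
  obtain ⟨j, k, hjk⟩ := exists_pair_ne ι
  obtain ⟨q, hq, hmin⟩ := Set.exists_min_image {q : ι × ι | q.1 ≠ q.2}
    (fun q => pairThreshold t E0 E q.1 q.2) (toFinite _) ⟨(j, k), hjk⟩
  exact ⟨q.1, q.2, hq, fun j' k' h => hmin (j', k') h⟩

variable {t E0 E}

lemma mem_strip0_of_pairThreshold_le {j k : ι} {r : ℝ} {p : ℝ × ℝ} (hjk : t j ≠ t k)
    (hr : pairThreshold t E0 E j k ≤ r) (hj : p ∈ stripT (t j) (E j) r)
    (hk : p ∈ stripT (t k) (E k) r) :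
    p ∈ strip0 E0 := by
  have hwidth := abs_sub_mul_abs_le_of_mem_stripT hj hk
  have hpos : 0 < |t j - t k| := abs_pos.2 (sub_ne_zero.2 hjk)
  unfold pairThreshold at hr
  exact le_of_mul_le_mul_left (by linarith) hpos

lemma pairThreshold_pos {j k : ι} {p : ℝ × ℝ} (hjk : t j ≠ t k)
    (hp : p ∈ ⋂ l, stripT (t l) (E l) 0) (hp0 : p ∉ strip0 E0) : 0 < pairThreshold t E0 E j k :=
  lt_of_not_ge fun h =>
    hp0 (mem_strip0_of_pairThreshold_le hjk h (mem_iInter.1 hp j) (mem_iInter.1 hp k))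

lemma lt_volume_of_le_pairThreshold {i l : ι} {r x : ℝ} (hr : r ≤ pairThreshold t E0 E i l)
    (hx : |x| ≤ (volume E0).toReal / 2)
    (hxl : (volume (E i)).toReal - (volume (E l)).toReal < 2 * (t i - t l) * x) :
    r < (volume (E l)).toReal := by
  unfold pairThreshold at hr
  linarith [mul_le_abs_mul_of_abs_le (b := t i - t l) hx]

/-- One-dimensional Helly: on the line, the lowest upper edge of the strips lies in all of them. -/
lemma exists_mk_mem_iInter_stripT [Finite ι] [Nonempty ι] {r x : ℝ}
    (hr : ∀ j k, j ≠ k → r ≤ pairThreshold t E0 E j k) (hrE : ∀ j, r ≤ (volume (E j)).toReal)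
    (hx : |x| ≤ (volume E0).toReal / 2) :
    ∃ y, (x, y) ∈ ⋂ j, stripT (t j) (E j) r := by
  obtain ⟨l, -, hl⟩ := Set.exists_min_image univ
    (fun j => ((volume (E j)).toReal - r) / 2 - t j * x) (toFinite _) univ_nonempty
  refine ⟨((volume (E l)).toReal - r) / 2 - t l * x, mem_iInter.2 fun j => ?_⟩
  show |((volume (E l)).toReal - r) / 2 - t l * x + t j * x| ≤ _
  refine abs_le.2 ⟨?_, by linarith [hl j (mem_univ j)]⟩
  rcases eq_or_ne j l with rfl | hjl
  · linarith [hrE j]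
  · have := hr l j hjl.symm
    unfold pairThreshold at this
    linarith [mul_le_abs_mul_of_abs_le (b := t l - t j) hx]

lemma mk_mem_strip0_inter_iInter_stripT {i : ι} {r x : ℝ}
    (hr : ∀ j, j ≠ i → r ≤ pairThreshold t E0 E i j) (hx : |x| ≤ (volume E0).toReal / 2)
    (hxi : ∀ j, j ≠ i → (volume (E i)).toReal - (volume (E j)).toReal < 2 * (t i - t j) * x) :
    (x, ((volume (E i)).toReal - r) / 2 - t i * x) ∈
      strip0 E0 ∩ ⋂ j ∈ ({i}ᶜ : Set ι), stripT (t j) (E j) r := by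
  refine ⟨hx, mem_iInter₂.2 fun j hj => ?_⟩
  show |((volume (E i)).toReal - r) / 2 - t i * x + t j * x| ≤ _
  refine abs_le.2 ⟨?_, ?_⟩
  · have := hr j hj
    unfold pairThreshold at this
    linarith [mul_le_abs_mul_of_abs_le (b := t i - t j) hx]
  · linarith [hxi j hj]

end PairThreshold

theorem stmt6_general (n : ℕ) (hn : 2 ≤ n) (t : Fin n → ℝ) (ht : Function.Injective t)
    (E0 : Set ℝ) (E : Fin n → Set ℝ)
    -- strict admissibility of (E₀, E₁, …, Eₙ):
    (hstrict0 : ¬ ((⋂ j, stripT (t j) (E j) 0) ⊆ strip0 E0))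
    (hstrict : ∀ i, ¬ ((strip0 E0 ∩ ⋂ j ∈ ({i}ᶜ : Set (Fin n)), stripT (t j) (E j) 0) ⊆
      stripT (t i) (E i) 0)) :
    ∃ r : ℝ, 0 < r ∧ (∀ j, r < (volume (E j)).toReal) ∧
      -- (a) the truncated tuple is admissible:
      (¬ ∃ U : Set (ℝ × ℝ), IsOpen U ∧ (⋂ j, stripT (t j) (E j) r) ⊆ U ∧ U ⊆ strip0 E0) ∧
      (∀ i, ¬ ∃ U : Set (ℝ × ℝ), IsOpen U ∧
        (strip0 E0 ∩ ⋂ j ∈ ({i}ᶜ : Set (Fin n)), stripT (t j) (E j) r) ⊆ U ∧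
        U ⊆ stripT (t i) (E i) r) ∧
      -- (b) `S_0^⋆ ⊇ ⋂_{j ≥ 1} S_j^⋆(r̄)`:
      (⋂ j, stripT (t j) (E j) r) ⊆ strip0 E0 := by
  have : Nontrivial (Fin n) := Fin.nontrivial_iff_two_le.2 hn
  obtain ⟨p0, hp0, hp0E0⟩ := not_subset.1 hstrict0
  choose x hx hxE using fun i => exists_abs_le_forall_sub_lt (hstrict i)
  obtain ⟨j, k, hjk, hmin⟩ := exists_pairThreshold_min t E0 E
  have hrE : ∀ l, pairThreshold t E0 E j k < (volume (E l)).toReal := fun l =>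
    let ⟨i, hil⟩ := exists_ne l
    lt_volume_of_le_pairThreshold (hmin i l hil) (hx i) (hxE i l hil.symm)
  refine ⟨pairThreshold t E0 E j k, pairThreshold_pos (ht.ne hjk) hp0 hp0E0, hrE, ?_,
    fun i => ?_, ?_⟩
  · rw [← subset_interior_iff]
    obtain ⟨y, hy⟩ := exists_mk_mem_iInter_stripT hmin (fun l => (hrE l).le)
      (abs_of_nonneg (by positivity : 0 ≤ (volume E0).toReal / 2)).le
    exact fun h => notMem_interior_strip0 rfl (h hy)
  · rw [← subset_interior_iff]
    exact fun h => notMem_interior_stripT (by ring)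
      (h (mk_mem_strip0_inter_iInter_stripT (fun l hl => hmin i l hl.symm) (hx i) (hxE i)))
  · intro p hp
    exact mem_strip0_of_pairThreshold_le (ht.ne hjk) le_rfl (mem_iInter.1 hp j) (mem_iInter.1 hp k)

/-- Deformation lemma: for a strictly admissible tuple there is `r̄ ∈ (0, min |E_j|)` such
that the truncated tuple is admissible and `S_0^⋆ ⊇ ⋂_{j ≥ 1} S_j^⋆(r̄)`. -/
theorem stmt6 (n : ℕ) (hn : 2 ≤ n) (t : Fin n → ℝ) (ht : Function.Injective t)
    (E0 : Set ℝ) (E : Fin n → Set ℝ)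
    (hmeas0 : MeasurableSet E0) (hpos0 : 0 < volume E0) (hfin0 : volume E0 < ⊤)
    (hmeas : ∀ j, MeasurableSet (E j)) (hpos : ∀ j, 0 < volume (E j))
    (hfin : ∀ j, volume (E j) < ⊤)
    -- strict admissibility of (E₀, E₁, …, Eₙ):
    (hstrict0 : ¬ ((⋂ j, stripT (t j) (E j) 0) ⊆ strip0 E0))
    (hstrict : ∀ i, ¬ ((strip0 E0 ∩ ⋂ j ∈ ({i}ᶜ : Set (Fin n)), stripT (t j) (E j) 0) ⊆
      stripT (t i) (E i) 0)) :
    ∃ r : ℝ, 0 < r ∧ (∀ j, r < (volume (E j)).toReal) ∧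
      -- (a) the truncated tuple is admissible:
      (¬ ∃ U : Set (ℝ × ℝ), IsOpen U ∧ (⋂ j, stripT (t j) (E j) r) ⊆ U ∧ U ⊆ strip0 E0) ∧
      (∀ i, ¬ ∃ U : Set (ℝ × ℝ), IsOpen U ∧
        (strip0 E0 ∩ ⋂ j ∈ ({i}ᶜ : Set (Fin n)), stripT (t j) (E j) r) ⊆ U ∧
        U ⊆ stripT (t i) (E i) r) ∧
      -- (b) `S_0^⋆ ⊇ ⋂_{j ≥ 1} S_j^⋆(r̄)`:
      (⋂ j, stripT (t j) (E j) r) ⊆ strip0 E0 :=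
  stmt6_general n hn t ht E0 E hstrict0 hstrict
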